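/- arXiv:1511.03983 — 2 statements merged into one kernel-verified Lean document; each statement's English description precedes it below -/
import Mathlib

section
/- Suppose around a degree-7 vertex w the seven incident faces are cyclically ordered and each 3-face containing a 4-vertex (a 'costly' face) occupies one cyclic position. If two 3-faces sharing an edge at w cannot both contain a 4⁻-vertex adjacent along that edge, then w is incident to at most four costly 3-faces, and if it is incident to exactly four, some incident face is not a 3-face. -/
/-!
Every costly 3-face has a 4⁺-face as a cyclic neighbor: the 4-vertex it contains cannot lie on
a second 3-face at `w`, so the other face at that 4-vertex is a 4⁺-face. A 4⁺-face neighbors at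
most two costly faces, so `c ≤ 2 t` for the numbers `c` of costly faces and `t` of 4⁺-faces;
together with `c + t ≤ 7` this gives `3 c ≤ 14`, i.e. `c ≤ 4`.
-/

open Finset

section

variable {G : Type*} [AddGroup G] [DecidableEq G] {d : G}

theorem card_le_two_mul_card_of_forall_neighbor_mem {C T : Finset G}
    (h : ∀ i ∈ C, i - d ∈ T ∨ i + d ∈ T) : #C ≤ 2 * #T := by
  have hsub : C ⊆ T.image (· + d) ∪ T.image (· - d) := by
    intro i hi
    rcases h i hi with h | h
    · exact mem_union_left _ (mem_image.2 ⟨i - d, h, sub_add_cancel i d⟩)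
    · exact mem_union_right _ (mem_image.2 ⟨i + d, h, add_sub_cancel_right i d⟩)
  calc #C ≤ #(T.image (· + d) ∪ T.image (· - d)) := card_le_card hsub
    _ ≤ #(T.image (· + d)) + #(T.image (· - d)) := card_union_le _ _
    _ ≤ #T + #T := add_le_add card_image_le card_image_le
    _ = 2 * #T := (two_mul _).symm

theorem three_mul_card_le_of_forall_neighbor_mem [Fintype G] {C T : Finset G}
    (hCT : Disjoint C T) (h : ∀ i ∈ C, i - d ∈ T ∨ i + d ∈ T) :
    3 * #C ≤ 2 * Fintype.card G := by
  have hcover : #C + #T ≤ Fintype.card G := by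
    rw [← card_union_of_disjoint hCT]
    exact card_le_univ _
  have := card_le_two_mul_card_of_forall_neighbor_mem h
  omega

end

theorem large_face_adjacent_of_costly {n : ℕ} (f : ZMod n → Fin 3) (g : ZMod n → Bool)
    (hcostly : ∀ i : ZMod n, f i = 0 → g i = true ∨ g (i + 1) = true)
    (h4vtx : ∀ j : ZMod n, g j = true → ¬ (f (j - 1) ≠ 2 ∧ f j ≠ 2))
    {i : ZMod n} (hi : f i = 0) : f (i - 1) = 2 ∨ f (i + 1) = 2 := by
  have hi2 : f i ≠ 2 := by rw [hi]; decide
  rcases hcostly i hi with h | h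
  · left
    by_contra hne
    exact h4vtx i h ⟨hne, hi2⟩
  · right
    by_contra hne
    exact h4vtx (i + 1) h ⟨by rwa [add_sub_cancel_right], hne⟩

/-- Faces around a degree-7 vertex `w` in cyclic positions `ZMod 7`,
classified by `f : ZMod 7 → Fin 3` (`0` = costly 3-face, `1` = other 3-face,
`2` = 4⁺-face); `g j = true` means the `j`-th neighbor of `w` is a 4-vertex.
Face `i` lies between neighbors `i` and `i+1`. If every costly 3-face contains a
4-vertex among its two neighbors of `w`, and every 4-vertex neighbor lies on at
most one incident 3-face of `w`, then `w` is incident to at most four costly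
3-faces, and if exactly four then some incident face is a 4⁺-face. -/
theorem at_most_four_costly_faces
    (f : ZMod 7 → Fin 3) (g : ZMod 7 → Bool)
    (hcostly : ∀ i : ZMod 7, f i = 0 → g i = true ∨ g (i + 1) = true)
    (h4vtx : ∀ j : ZMod 7, g j = true → ¬ (f (j - 1) ≠ 2 ∧ f j ≠ 2)) :
    (Finset.univ.filter (fun i : ZMod 7 => f i = 0)).card ≤ 4 ∧
    ((Finset.univ.filter (fun i : ZMod 7 => f i = 0)).card = 4 →
      ∃ i : ZMod 7, f i = 2) := by
  have hadj := fun i (hi : f i = 0) => large_face_adjacent_of_costly f g hcostly h4vtx hi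
  have hbound : 3 * #(univ.filter fun i => f i = 0) ≤ 2 * Fintype.card (ZMod 7) := by
    refine three_mul_card_le_of_forall_neighbor_mem (d := 1)
      (T := univ.filter fun i : ZMod 7 => f i = 2) ?_ ?_
    · exact disjoint_filter.2 fun i _ h0 h2 => absurd (h0.symm.trans h2) (by decide)
    · intro i hi
      simpa only [mem_filter, mem_univ, true_and] using hadj i (mem_filter.1 hi).2
  rw [ZMod.card] at hbound
  refine ⟨by omega, fun hfour => ?_⟩
  obtain ⟨i, hi⟩ := card_pos.1 (by omega : 0 < #(univ.filter fun i => f i = 0))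
  rcases hadj i (mem_filter.1 hi).2 with h | h
  exacts [⟨_, h⟩, ⟨_, h⟩]
end

section
/- For any n ≥ 3, a subset S of ZMod n containing no three cyclically consecutive elements has cardinality at most ⌊2n/3⌋. -/
/-! Double counting: each of the three translates `S - 0`, `S - 1`, `S - 2` has `|S|` elements,
so the windows `{i, i + 1, i + 2}` contain `3 |S|` elements of `S` in total, while each of the
`n` windows contains at most two. -/

open Finset

section Windows

variable {G ι : Type*} [AddGroup G] [Fintype G] [DecidableEq G] [Fintype ι]

theorem sum_card_filter_add_mem (d : ι → G) (S : Finset G) :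
    ∑ g : G, #{j | g + d j ∈ S} = Fintype.card ι * #S := by
  have translate (j : ι) : ∑ g : G, (if g + d j ∈ S then 1 else 0) = #S :=
    (Equiv.sum_comp (Equiv.addRight (d j)) fun g => if g ∈ S then 1 else 0).trans (by simp)
  simp only [card_filter]
  rw [sum_comm, sum_congr rfl fun j _ => translate j, sum_const, card_univ,
    smul_eq_mul]

theorem card_mul_le_of_forall_card_filter_add_mem_le (d : ι → G) (S : Finset G) {k : ℕ}
    (hk : ∀ g : G, #{j | g + d j ∈ S} ≤ k) :
    Fintype.card ι * #S ≤ k * Fintype.card G := by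
  calc Fintype.card ι * #S = ∑ g : G, #{j | g + d j ∈ S} := (sum_card_filter_add_mem d S).symm
    _ ≤ ∑ _g : G, k := sum_le_sum fun g _ => hk g
    _ = k * Fintype.card G := by rw [sum_const, card_univ, smul_eq_mul, mul_comm]

end Windows

theorem no_three_consecutive_card_bound_general (n : ℕ) [NeZero n]
    (S : Finset (ZMod n))
    (h : ∀ i : ZMod n, ¬ (i ∈ S ∧ i + 1 ∈ S ∧ i + 2 ∈ S)) :
    S.card ≤ 2 * n / 3 := by
  have window (i : ZMod n) : #{j : Fin 3 | i + ![0, 1, 2] j ∈ S} ≤ 2 := by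
    have hne : ({j : Fin 3 | i + ![0, 1, 2] j ∈ S} : Finset (Fin 3)) ≠ univ := fun hall => by
      have hmem (j : Fin 3) : i + ![0, 1, 2] j ∈ S := filter_eq_self.mp hall j (mem_univ j)
      exact h i ⟨by simpa using hmem 0, hmem 1, hmem 2⟩
    have := (card_lt_iff_ne_univ _).mpr hne
    simp only [Fintype.card_fin] at this
    omega
  have key := card_mul_le_of_forall_card_filter_add_mem_le ![0, 1, 2] S window
  rw [Fintype.card_fin, ZMod.card] at key
  omega

/-- A subset of `ZMod n` (`n ≥ 3`) with no three cyclically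
consecutive elements has cardinality at most `⌊2n/3⌋`. -/
theorem no_three_consecutive_card_bound (n : ℕ) [NeZero n] (hn : 3 ≤ n)
    (S : Finset (ZMod n))
    (h : ∀ i : ZMod n, ¬ (i ∈ S ∧ i + 1 ∈ S ∧ i + 2 ∈ S)) :
    S.card ≤ 2 * n / 3 :=
  no_three_consecutive_card_bound_general n S h
end
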